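/- arXiv:1507.07357 — 2 statements merged into one kernel-verified Lean document; each statement's English description precedes it below -/
import Mathlib

section
/- Poisson kernel reproduces the logarithm: for any x₀ with ‖x₀‖ < 1 and any y with ‖y‖ = 1 (or more generally ‖y‖ ≥ 1), ∫_{‖x‖=1} log(‖x - y‖) · (1/(2π)) (1-‖x₀‖²)/‖x-x₀‖² ds(x) = log(‖x₀ - y‖), where ds is arc-length measure on the unit circle. -/
open MeasureTheory Real

noncomputable section

abbrev E2 := EuclideanSpace ℝ (Fin 2)

noncomputable def sInt (σ : MeasureTheory.SignedMeasure E2) (f : E2 → ℝ) : ℝ :=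
  ∫ x, f x ∂σ.toJordanDecomposition.posPart - ∫ x, f x ∂σ.toJordanDecomposition.negPart

noncomputable def totalVar (σ : MeasureTheory.SignedMeasure E2) : Measure E2 :=
  σ.toJordanDecomposition.posPart + σ.toJordanDecomposition.negPart

def finiteLogEnergy (σ : MeasureTheory.SignedMeasure E2) : Prop :=
  ∫⁻ x, ∫⁻ y, ENNReal.ofReal |Real.log (dist x y)| ∂(totalVar σ) ∂(totalVar σ) < ⊤

def memM (σ : MeasureTheory.SignedMeasure E2) : Prop :=
  σ Set.univ = 0 ∧ (∀ x : E2, σ {x} = 0) ∧ finiteLogEnergy σ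

noncomputable def pairing (σ ν : MeasureTheory.SignedMeasure E2) : ℝ :=
  -(sInt σ fun x => sInt ν fun y => Real.log (dist x y))

noncomputable def heatKernel (t : ℝ) (x y : E2) : ℝ :=
  (2 * π * t)⁻¹ * Real.exp (-(dist x y)^2 / (2 * t))

structure BM (Ω : Type) [MeasurableSpace Ω] where
  P : E2 → Measure Ω
  W : ℝ → Ω → E2
  prob : ∀ x, IsProbabilityMeasure (P x)
  meas : ∀ t, Measurable (W t)
  start : ∀ x, ∀ᵐ ω ∂P x, W 0 ω = x
  cont : ∀ x, ∀ᵐ ω ∂P x, Continuous fun t => W t ω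
  incr : ∀ x : E2, ∀ s t : ℝ, 0 ≤ s → s < t →
    Measure.map (fun ω => W t ω - W s ω) (P x)
      = volume.withDensity fun y => ENNReal.ofReal (heatKernel (t - s) 0 y)
  indep : ∀ x : E2, ∀ n : ℕ, ∀ t : Fin (n+1) → ℝ, Monotone t → 0 ≤ t 0 →
    ProbabilityTheory.iIndepFun
      (fun i : Fin n => fun ω => W (t i.succ) ω - W (t i.castSucc) ω) (P x)

noncomputable def hitTime {Ω : Type} [MeasurableSpace Ω] (B : BM Ω) (D : Set E2) (ω : Ω) : ℝ :=
  sInf {t | 0 ≤ t ∧ B.W t ω ∈ D}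

noncomputable def hitLaw {Ω : Type} [MeasurableSpace Ω] (B : BM Ω) (D : Set E2) (x : E2) : Measure E2 :=
  Measure.map (fun ω => B.W (hitTime B D ω) ω) (B.P x)

noncomputable def lap (f : E2 → ℝ) (x : E2) : ℝ :=
  ∑ i : Fin 2, iteratedFDeriv ℝ 2 f x ![EuclideanSpace.single i 1, EuclideanSpace.single i 1]

noncomputable def circlePt (θ : ℝ) : E2 := (WithLp.equiv 2 (Fin 2 → ℝ)).symm ![Real.cos θ, Real.sin θ]

noncomputable def arcLength : Measure E2 := Measure.map circlePt (volume.restrict (Set.Ico 0 (2*π)))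

/-!
For `b` outside the closed disc, `log ‖· - b‖` is harmonic on a neighbourhood of it, so the
Poisson integral formula for harmonic functions applies. For `b` on the boundary circle, push `b`
radially outwards to `c + t • (b - c)` and let `t ↓ 1`: on the circle
`‖z - b‖ ≤ ‖z - (c + t • (b - c))‖ ≤ 3R`, so the integrands are dominated by a multiple of
`|log ‖z - b‖| + |log (3R)|`, integrable since a logarithmic singularity is. Finally, identifying
`E2` with `ℂ`, `arcLength` is the image of `dθ` on `[0, 2π)`, which turns the integral into `2π`
times a circle average.
-/

open Metric Filter Topology

theorem norm_sub_le_norm_sub_smul {E : Type*} [NormedAddCommGroup E] [InnerProductSpace ℝ E]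
    {u v : E} {t : ℝ} (huv : ‖u‖ ≤ ‖v‖) (ht : 1 ≤ t) : ‖u - v‖ ≤ ‖u - t • v‖ := by
  have hinner : inner ℝ u v ≤ ‖v‖ ^ 2 :=
    (real_inner_le_norm u v).trans (by nlinarith [norm_nonneg u, norm_nonneg v])
  have hsq : ‖u - v‖ ^ 2 ≤ ‖u - t • v‖ ^ 2 := by
    rw [norm_sub_sq_real, norm_sub_sq_real, real_inner_smul_right, norm_smul,
      Real.norm_of_nonneg (by linarith)]
    nlinarith [mul_nonneg (sub_nonneg.2 ht) (sub_nonneg.2 hinner),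
      mul_nonneg (sq_nonneg (t - 1)) (sq_nonneg ‖v‖)]
  exact (pow_le_pow_iff_left₀ (norm_nonneg _) (norm_nonneg _) two_ne_zero).1 hsq

theorem abs_log_le_abs_log_add_abs_log {m M x : ℝ} (hm : 0 < m) (hmx : m ≤ x) (hxM : x ≤ M) :
    |log x| ≤ |log m| + |log M| := by
  have h₁ := log_le_log hm hmx
  have h₂ := log_le_log (hm.trans_le hmx) hxM
  rw [abs_le]
  constructor <;> linarith [neg_abs_le (log m), le_abs_self (log M), abs_nonneg (log m),
    abs_nonneg (log M)]

theorem ae_circleMap_ne {c : ℂ} {R : ℝ} (hR : R ≠ 0) (b : ℂ) :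
    ∀ᵐ θ : ℝ, circleMap c R θ ≠ b := by
  have := ae_restrict_le_codiscreteWithin (μ := (volume : Measure ℝ)) MeasurableSet.univ
    (circleMap_preimage_codiscrete (c := c) hR (compl_singleton_mem_codiscreteWithin b))
  rw [Measure.restrict_univ] at this
  filter_upwards [this] with θ hθ
  simpa using hθ

section PoissonKernel

variable {c a b : ℂ} {R : ℝ}

theorem measurable_poissonKernel (c a : ℂ) : Measurable (poissonKernel c a) := by
  unfold poissonKernel; fun_prop

theorem poissonKernel_nonneg {z : ℂ} (ha : a ∈ ball c R) (hz : z ∈ sphere c R) :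
    0 ≤ poissonKernel c a z := by
  rw [poissonKernel_def, mem_sphere_iff_norm.1 hz]
  exact div_nonneg (sub_nonneg.2 (pow_le_pow_left₀ (norm_nonneg _) (mem_ball_iff_norm.1 ha).le 2))
    (sq_nonneg _)

theorem poissonKernel_le {z : ℂ} (ha : a ∈ ball c R) (hz : z ∈ sphere c R) :
    poissonKernel c a z ≤ (R + ‖a - c‖) / (R - ‖a - c‖) := by
  rw [poissonKernel_eq_re_herglotzRieszKernel]
  exact re_herglotzRieszKernel_le hz ha

theorem circleAverage_poissonKernel_smul_log_norm_sub_of_notMem_closedBall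
    (ha : a ∈ ball c R) (hb : b ∉ closedBall c R) :
    circleAverage (poissonKernel c a • fun z ↦ log ‖z - b‖) c R = log ‖a - b‖ :=
  InnerProductSpace.HarmonicOnNhd.circleAverage_poissonKernel_smul
    (fun z hz ↦ AnalyticAt.harmonicAt_log_norm (by fun_prop)
      (sub_ne_zero.2 (ne_of_mem_of_not_mem hz hb))) ha

theorem tendsto_circleAverage_poissonKernel_smul_log_norm_sub
    (ha : a ∈ ball c R) (hb : b ∈ sphere c R) :
    Tendsto (fun t : ℝ ↦
        circleAverage (poissonKernel c a • fun z ↦ log ‖z - (c + t • (b - c))‖) c R)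
      (𝓝[>] 1) (𝓝 (circleAverage (poissonKernel c a • fun z ↦ log ‖z - b‖) c R)) := by
  have hR : 0 < R := pos_of_mem_ball ha
  have hbR : ‖b - c‖ = R := mem_sphere_iff_norm.1 hb
  set M := (R + ‖a - c‖) / (R - ‖a - c‖)
  simp only [circleAverage_def]
  refine Tendsto.const_smul (intervalIntegral.tendsto_integral_filter_of_dominated_convergence
    (fun θ ↦ M * (|log ‖circleMap c R θ - b‖| + |log (3 * R)|)) ?_ ?_ ?_ ?_) _
  · exact Eventually.of_forall fun t ↦ by
      simp only [Pi.smul_apply', smul_eq_mul]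
      exact (((measurable_poissonKernel c a).comp (by fun_prop)).mul
        (by fun_prop)).aestronglyMeasurable
  · filter_upwards [Ioc_mem_nhdsGT one_lt_two] with t ht
    filter_upwards [ae_circleMap_ne hR.ne' b] with θ hθ _
    set z := circleMap c R θ
    have hz : z ∈ sphere c R := circleMap_mem_sphere c hR.le θ
    have hzc : ‖z - c‖ = R := mem_sphere_iff_norm.1 hz
    have hlow : ‖z - b‖ ≤ ‖z - (c + t • (b - c))‖ := by
      simpa [sub_sub, sub_add_cancel] using
        norm_sub_le_norm_sub_smul (u := z - c) (v := b - c) (hzc.trans hbR.symm).le ht.1.le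
    have hup : ‖z - (c + t • (b - c))‖ ≤ 3 * R := by
      calc ‖z - (c + t • (b - c))‖ = ‖(z - c) - t • (b - c)‖ := by congr 1; abel
        _ ≤ ‖z - c‖ + ‖t • (b - c)‖ := norm_sub_le _ _
        _ ≤ 3 * R := by
          rw [norm_smul, Real.norm_of_nonneg (by linarith [ht.1]), hzc, hbR]; nlinarith [ht.2]
    simp only [Pi.smul_apply', smul_eq_mul, norm_mul, Real.norm_eq_abs,
      abs_of_nonneg (poissonKernel_nonneg ha hz)]
    exact mul_le_mul (poissonKernel_le ha hz)
      (abs_log_le_abs_log_add_abs_log (norm_pos_iff.2 (sub_ne_zero.2 hθ)) hlow hup)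
      (abs_nonneg _) ((poissonKernel_nonneg ha hz).trans (poissonKernel_le ha hz))
  · have hlog : IntervalIntegrable (fun θ ↦ |log ‖circleMap c R θ - b‖|) volume 0 (2 * π) :=
      (circleIntegrable_log_norm_sub_const R).abs
    exact (hlog.add intervalIntegrable_const).const_mul M
  · filter_upwards [ae_circleMap_ne hR.ne' b] with θ hθ _
    simp only [Pi.smul_apply', smul_eq_mul]
    apply tendsto_nhdsWithin_of_tendsto_nhds
    have hcont : ContinuousAt (fun t : ℝ ↦ log ‖circleMap c R θ - (c + t • (b - c))‖) 1 := by
      apply ContinuousAt.log (by fun_prop)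
      simpa [sub_eq_zero] using hθ
    simpa using (hcont.const_mul (poissonKernel c a (circleMap c R θ))).tendsto

theorem circleAverage_poissonKernel_smul_log_norm_sub_of_mem_sphere
    (ha : a ∈ ball c R) (hb : b ∈ sphere c R) :
    circleAverage (poissonKernel c a • fun z ↦ log ‖z - b‖) c R = log ‖a - b‖ := by
  have hbR : ‖b - c‖ = R := mem_sphere_iff_norm.1 hb
  have hexterior : ∀ t : ℝ, 1 < t → c + t • (b - c) ∉ closedBall c R := fun t ht ↦ by
    rw [mem_closedBall_iff_norm, add_sub_cancel_left, norm_smul, Real.norm_of_nonneg (by linarith),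
      hbR, not_le]
    nlinarith [pos_of_mem_ball ha]
  have hab : a - b ≠ 0 :=
    sub_ne_zero.2 (ne_of_mem_of_not_mem ha (by rw [mem_ball_iff_norm, hbR]; exact lt_irrefl R))
  have hlim : Tendsto (fun t : ℝ ↦ log ‖a - (c + t • (b - c))‖) (𝓝[>] 1) (𝓝 (log ‖a - b‖)) := by
    apply tendsto_nhdsWithin_of_tendsto_nhds
    have hcont : ContinuousAt (fun t : ℝ ↦ log ‖a - (c + t • (b - c))‖) 1 :=
      ContinuousAt.log (by fun_prop) (by simpa using hab)
    simpa using hcont.tendsto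
  refine tendsto_nhds_unique
    ((tendsto_circleAverage_poissonKernel_smul_log_norm_sub ha hb).congr' ?_) hlim
  filter_upwards [self_mem_nhdsWithin] with t ht
  exact circleAverage_poissonKernel_smul_log_norm_sub_of_notMem_closedBall ha (hexterior t ht)

theorem circleAverage_poissonKernel_smul_log_norm_sub
    (ha : a ∈ ball c R) (hb : b ∉ ball c R) :
    circleAverage (poissonKernel c a • fun z ↦ log ‖z - b‖) c R = log ‖a - b‖ := by
  by_cases hbR : b ∈ sphere c R
  · exact circleAverage_poissonKernel_smul_log_norm_sub_of_mem_sphere ha hbR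
  · refine circleAverage_poissonKernel_smul_log_norm_sub_of_notMem_closedBall ha ?_
    rw [← ball_union_sphere]
    exact fun h ↦ h.elim hb hbR

end PoissonKernel

theorem circlePt_eq_repr_circleMap (θ : ℝ) :
    circlePt θ = Complex.orthonormalBasisOneI.repr (circleMap 0 1 θ) := by
  ext i
  fin_cases i <;>
    simp [circlePt, circleMap, Complex.exp_ofReal_mul_I_re, Complex.exp_ofReal_mul_I_im]

theorem integral_arcLength {f : E2 → ℝ} (hf : AEStronglyMeasurable f arcLength) :
    ∫ x, f x ∂arcLength = 2 * π * circleAverage (f ∘ Complex.orthonormalBasisOneI.repr) 0 1 := by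
  have hmeas : Measurable circlePt := by
    rw [funext circlePt_eq_repr_circleMap]; fun_prop
  rw [arcLength, integral_map hmeas.aemeasurable hf, integral_Ico_eq_integral_Ioo,
    ← integral_Ioc_eq_integral_Ioo, ← intervalIntegral.integral_of_le (by positivity),
    circleAverage_def, smul_eq_mul, ← mul_assoc, mul_inv_cancel₀ (by positivity), one_mul]
  simp only [Function.comp_apply, circlePt_eq_repr_circleMap]

theorem stmt13 (x₀ y : E2) (hx₀ : ‖x₀‖ < 1) (hy : 1 ≤ ‖y‖) :
    ∫ x, Real.log (dist x y) * ((2 * π)⁻¹ * (1 - ‖x₀‖^2) / dist x x₀ ^ 2) ∂arcLength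
      = Real.log (dist x₀ y) := by
  set ψ := Complex.orthonormalBasisOneI.repr
  have hdist : ∀ z w, dist (ψ z) w = ‖z - ψ.symm w‖ := fun z w ↦ by
    rw [← ψ.apply_symm_apply w, ψ.dist_map, dist_eq_norm, ψ.symm_apply_apply]
  have hkernel : Set.EqOn
      (fun z ↦ log (dist (ψ z) y) * ((2 * π)⁻¹ * (1 - ‖x₀‖ ^ 2) / dist (ψ z) x₀ ^ 2))
      (fun z ↦ (2 * π)⁻¹ • (poissonKernel 0 (ψ.symm x₀) • fun z ↦ log ‖z - ψ.symm y‖) z)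
      (sphere 0 |1|) := fun z hz ↦ by
    simp only [abs_one, mem_sphere_zero_iff_norm] at hz
    simp only [hdist, Pi.smul_apply', smul_eq_mul, poissonKernel_def, sub_zero, hz,
      LinearIsometryEquiv.norm_map]
    ring
  rw [integral_arcLength (by fun_prop), Function.comp_def, circleAverage_congr_sphere hkernel,
    circleAverage_fun_smul, circleAverage_poissonKernel_smul_log_norm_sub
      (by simpa using hx₀) (by simpa using hy), ← hdist, ψ.apply_symm_apply, smul_eq_mul]
  field_simp
end
end

section
/- For absolutely continuous ν ∈ M with bounded compactly supported density ρ and zero total mass, and x outside the support of ρ, the integral over t of ∫ p_t(x,y) ρ(y) dy converges and equals ∫ g(x,y) ρ(y) dy = -(1/π) ∫ log‖x-y‖ ρ(y) dy; equivalently E_x ∫₀^∞ ρ(W_t) dt = ∫ g(x,y) ρ(y) dy when interpreted as the stated iterated integral. -/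
open MeasureTheory Real

noncomputable section

/-!
Since `∫ ρ = 0`, the heat kernel `p_t(x, y)` may be replaced by `p_t(x, y) - q_t`, where `q_t` is
its value at distance `1`, which does not depend on `y`. As a function of `t`, the kernel
`p_t(r) - p_t(1)` of the distance `r` is a Frullani integrand, with
`∫₀^∞ (p_t(r) - p_t(1)) dt = -(1/π) log r`, and for `r` in a compact subset of `(0, ∞)` it is
dominated by `c t⁻² e^{-m/t}`, which is integrable on `(0, ∞)`. Because `x` lies at positive
distance from the compact support of `ρ`, this domination makes Fubini's theorem applicable.
-/

open Set Filter Topology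

lemma integrableOn_Ioi_inv_sq_mul_exp_neg_div {m : ℝ} (hm : 0 < m) :
    IntegrableOn (fun t : ℝ => (t ^ 2)⁻¹ * exp (-(m / t))) (Ioi 0) := by
  have h := (integrableOn_Ioi_comp_rpow_iff' (fun u : ℝ => exp (-m * u))
    (p := -1) (by norm_num)).2 (exp_neg_integrableOn_Ioi 0 hm)
  refine h.congr_fun (fun t (ht : 0 < t) => ?_) measurableSet_Ioi
  simp [show (-1 : ℝ) - 1 = -(2 : ℕ) by norm_num, Real.rpow_neg ht.le, div_eq_mul_inv]

lemma abs_exp_neg_sub_exp_neg_le (u v : ℝ) :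
    |exp (-u) - exp (-v)| ≤ |u - v| * exp (-min u v) := by
  wlog huv : u ≤ v generalizing u v
  · simpa only [abs_sub_comm, min_comm] using this v u (le_of_not_ge huv)
  have hsplit : exp (-v) = exp (-u) * exp (-(v - u)) := by rw [← exp_add]; ring_nf
  have hlin := add_one_le_exp (-(v - u))
  rw [min_eq_left huv, abs_of_nonneg (by rw [sub_nonneg]; exact exp_le_exp.2 (by linarith)),
    abs_sub_comm, abs_of_nonneg (by linarith), hsplit]
  nlinarith [exp_pos (-u)]

-- `heatKernel t x y = heatProfile t (dist x y)` holds by `rfl`.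
def heatProfile (t r : ℝ) : ℝ := (2 * π * t)⁻¹ * exp (-r ^ 2 / (2 * t))

lemma heatProfile_sub_heatProfile_one (t r : ℝ) :
    heatProfile t r - heatProfile t 1 =
      (2 * π * t)⁻¹ * (exp (-(r ^ 2 / (2 * t))) - exp (-(1 / (2 * t)))) := by
  simp only [heatProfile, neg_div, one_pow, mul_sub]

lemma abs_heatProfile_sub_heatProfile_one_le {t δ R r : ℝ} (ht : 0 < t) (hδ : 0 < δ)
    (hδr : δ ≤ r) (hrR : r ≤ R) :
    |heatProfile t r - heatProfile t 1| ≤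
      max (R ^ 2) 1 / (4 * π) * ((t ^ 2)⁻¹ * exp (-(min (δ ^ 2) 1 / 2 / t))) := by
  have h2t : 0 < 2 * t := by positivity
  have hdiff : |r ^ 2 / (2 * t) - 1 / (2 * t)| ≤ max (R ^ 2) 1 / (2 * t) := by
    rw [div_sub_div_same, abs_div, abs_of_pos h2t]
    gcongr
    have : r ^ 2 ≤ R ^ 2 := by gcongr; linarith
    rw [abs_le]
    constructor <;> nlinarith [le_max_left (R ^ 2) 1, le_max_right (R ^ 2) 1]
  have hmin : exp (-min (r ^ 2 / (2 * t)) (1 / (2 * t))) ≤ exp (-(min (δ ^ 2) 1 / 2 / t)) := by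
    rw [min_div_div_right h2t.le, div_div]
    gcongr
  rw [heatProfile_sub_heatProfile_one, abs_mul, abs_of_pos (by positivity)]
  calc (2 * π * t)⁻¹ * |exp (-(r ^ 2 / (2 * t))) - exp (-(1 / (2 * t)))|
      ≤ (2 * π * t)⁻¹ * (max (R ^ 2) 1 / (2 * t) * exp (-(min (δ ^ 2) 1 / 2 / t))) := by
        gcongr
        exact (abs_exp_neg_sub_exp_neg_le _ _).trans
          (mul_le_mul hdiff hmin (exp_pos _).le (by positivity))
    _ = max (R ^ 2) 1 / (4 * π) * ((t ^ 2)⁻¹ * exp (-(min (δ ^ 2) 1 / 2 / t))) := by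
        field_simp
        ring

lemma integrableOn_heatProfile_sub_heatProfile_one {r : ℝ} (hr : 0 < r) :
    IntegrableOn (fun t => heatProfile t r - heatProfile t 1) (Ioi 0) := by
  refine Integrable.mono' ((integrableOn_Ioi_inv_sq_mul_exp_neg_div
    (m := min (r ^ 2) 1 / 2) (by positivity)).const_mul (max (r ^ 2) 1 / (4 * π)))
    (by unfold heatProfile; fun_prop : Measurable _).aestronglyMeasurable ?_
  refine (ae_restrict_iff' measurableSet_Ioi).2 (ae_of_all _ fun t (ht : 0 < t) => ?_)
  exact abs_heatProfile_sub_heatProfile_one_le ht hr le_rfl le_rfl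

lemma integral_heatProfile_sub_heatProfile_one {r : ℝ} (hr : 0 < r) :
    ∫ t in Ioi 0, (heatProfile t r - heatProfile t 1) = -(1 / π) * log r := by
  set f : ℝ → ℝ := fun u => exp (-u⁻¹)
  have hfrullani : ∀ t, heatProfile t r - heatProfile t 1 =
      (2 * π)⁻¹ * (t⁻¹ • (f (2 / r ^ 2 * t) - f (2 * t))) := by
    intro t
    simp only [heatProfile_sub_heatProfile_one, f, smul_eq_mul, mul_inv, inv_div]
    ring_nf
  have hint : IntegrableOn (fun t => t⁻¹ • (f (2 / r ^ 2 * t) - f (2 * t))) (Ioi 0) := by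
    refine IntegrableOn.congr_fun ((integrableOn_heatProfile_sub_heatProfile_one hr).const_mul
      (2 * π)) (fun t _ => ?_) measurableSet_Ioi
    rw [hfrullani, ← mul_assoc, mul_inv_cancel₀ (by positivity), one_mul]
  have hloc : LocallyIntegrableOn f (Ioi 0) :=
    (continuousOn_inv₀.mono fun u (hu : 0 < u) => hu.ne').neg.rexp.locallyIntegrableOn
      measurableSet_Ioi
  have hzero : Tendsto f (𝓝[>] 0) (𝓝 0) :=
    tendsto_exp_atBot.comp (tendsto_neg_atTop_atBot.comp tendsto_inv_nhdsGT_zero)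
  have hone : Tendsto f atTop (𝓝 1) := by
    simpa using (tendsto_inv_atTop_zero.neg).rexp
  simp_rw [hfrullani]
  rw [integral_const_mul, Frullani.integral_Ioi_eq hloc (by positivity) two_pos hzero hone hint,
    div_div_eq_mul_div, mul_div_cancel_left₀ _ two_ne_zero, log_pow, smul_eq_mul]
  field_simp
  ring

lemma integral_sub_const_mul_of_integral_eq_zero {α : Type*} [MeasurableSpace α]
    {μ : Measure α} {f ρ : α → ℝ} (hfρ : Integrable (fun y => f y * ρ y) μ)
    (hρ : Integrable ρ μ) (hρ0 : ∫ y, ρ y ∂μ = 0) (c : ℝ) :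
    ∫ y, (f y - c) * ρ y ∂μ = ∫ y, f y * ρ y ∂μ := by
  simp_rw [sub_mul]
  rw [integral_sub hfρ (hρ.const_mul c), integral_const_mul, hρ0, mul_zero, sub_zero]

lemma integrable_heatProfile_sub_mul_prod {α : Type*} [PseudoMetricSpace α] [MeasurableSpace α]
    [OpensMeasurableSpace α] {μ : Measure α} [SFinite μ] {ρ : α → ℝ} (hρ : Integrable ρ μ)
    (x : α) {δ R : ℝ} (hδ : 0 < δ) (hdist : ∀ y, ρ y ≠ 0 → δ ≤ dist x y ∧ dist x y ≤ R) :
    Integrable (Function.uncurry fun t y => (heatProfile t (dist x y) - heatProfile t 1) * ρ y)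
      ((volume.restrict (Ioi 0)).prod μ) := by
  have hmeas : Measurable fun p : ℝ × α => heatProfile p.1 (dist x p.2) - heatProfile p.1 1 := by
    unfold heatProfile; fun_prop
  refine Integrable.mono' ((integrableOn_Ioi_inv_sq_mul_exp_neg_div
    (m := min (δ ^ 2) 1 / 2) (by positivity)).mul_prod
    (hρ.norm.const_mul (max (R ^ 2) 1 / (4 * π))))
    (hmeas.aestronglyMeasurable.mul hρ.aestronglyMeasurable.comp_snd) ?_
  rw [← Measure.restrict_univ (μ := μ), Measure.prod_restrict,
    ae_restrict_iff' (measurableSet_Ioi.prod MeasurableSet.univ)]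
  refine ae_of_all _ fun ⟨t, y⟩ ⟨(ht : 0 < t), _⟩ => ?_
  rw [Function.uncurry_apply_pair, norm_mul, Real.norm_eq_abs]
  by_cases hy : ρ y = 0
  · rw [hy, norm_zero, mul_zero]
    positivity
  calc |heatProfile t (dist x y) - heatProfile t 1| * ‖ρ y‖
      ≤ max (R ^ 2) 1 / (4 * π) * ((t ^ 2)⁻¹ * exp (-(min (δ ^ 2) 1 / 2 / t))) * ‖ρ y‖ := by
        gcongr
        exact abs_heatProfile_sub_heatProfile_one_le ht hδ (hdist y hy).1 (hdist y hy).2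
    _ = _ := by ring

lemma integrable_heatKernel_mul {μ : Measure E2} {ρ : E2 → ℝ} (hρ : Integrable ρ μ) {t : ℝ}
    (ht : 0 < t) (x : E2) : Integrable (fun y => heatKernel t x y * ρ y) μ := by
  refine hρ.bdd_mul (c := (2 * π * t)⁻¹)
    (by unfold heatKernel; fun_prop : Measurable _).aestronglyMeasurable (ae_of_all _ fun y => ?_)
  rw [Real.norm_eq_abs, abs_of_nonneg (by unfold heatKernel; positivity)]
  refine mul_le_of_le_one_right (by positivity) (exp_le_one_iff.2 ?_)
  exact div_nonpos_of_nonpos_of_nonneg (neg_nonpos.2 (by positivity)) (by positivity)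

theorem stmt17 (ρ : E2 → ℝ) (hmeas : Measurable ρ) (C : ℝ) (hbd : ∀ y, |ρ y| ≤ C)
    (hsupp : HasCompactSupport ρ) (hzero : ∫ y, ρ y = 0)
    (x : E2) (hx : x ∉ tsupport ρ) :
    MeasureTheory.IntegrableOn (fun t => ∫ y, heatKernel t x y * ρ y) (Set.Ioi 0) ∧
    ∫ t in Set.Ioi (0:ℝ), (∫ y, heatKernel t x y * ρ y)
      = ∫ y, (-(1/π) * Real.log (dist x y)) * ρ y := by
  have hρ : Integrable ρ :=
    (integrableOn_iff_integrable_of_support_subset (subset_tsupport ρ)).1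
      (Measure.integrableOn_of_bounded hsupp.measure_lt_top.ne hmeas.aestronglyMeasurable
        (ae_of_all _ hbd))
  obtain ⟨δ, hδ, hball⟩ := Metric.isOpen_iff.1 (isClosed_tsupport ρ).isOpen_compl x hx
  obtain ⟨R, hR⟩ := hsupp.isBounded.subset_closedBall x
  have hdist : ∀ y, ρ y ≠ 0 → δ ≤ dist x y ∧ dist x y ≤ R := fun y hy =>
    ⟨not_lt.1 fun h => hball (Metric.mem_ball'.2 h) (subset_tsupport ρ hy),
      Metric.mem_closedBall'.1 (hR (subset_tsupport ρ hy))⟩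
  have hG := integrable_heatProfile_sub_mul_prod hρ x hδ hdist
  have hinner : ∀ t ∈ Ioi (0 : ℝ), ∫ y, heatKernel t x y * ρ y =
      ∫ y, (heatProfile t (dist x y) - heatProfile t 1) * ρ y := fun t ht =>
    (integral_sub_const_mul_of_integral_eq_zero (integrable_heatKernel_mul hρ ht x) hρ hzero _).symm
  refine ⟨IntegrableOn.congr_fun hG.integral_prod_left (fun t ht => (hinner t ht).symm)
    measurableSet_Ioi, ?_⟩
  rw [setIntegral_congr_fun measurableSet_Ioi hinner, integral_integral_swap hG]
  refine integral_congr_ae (ae_of_all _ fun y => ?_)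
  by_cases hy : ρ y = 0
  · simp [hy]
  dsimp only
  rw [integral_mul_const, integral_heatProfile_sub_heatProfile_one (hδ.trans_le (hdist y hy).1)]
end
end
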